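/- Let (A, r) be a co-quasitriangular Hopf algebra over a field and let Y be an invertible functional on A (an invertible element of the dual algebra) such that r(φ,ψ) = Y^{−1}(φ_1) Y^{−1}(ψ_1) Y(φ_2ψ_2) for all φ,ψ ∈ A. Then the map ι_Y : A → {}^R A, φ ↦ Y(φ_1) φ_2, is an isomorphism of algebras, where {}^R A denotes A equipped with the twisted product φ •_R ψ = r(φ_1,ψ_1)φ_2ψ_2. In particular, for A = O_q[G] and Y = C T_{w_0} the element of the quantum Weyl group completion satisfying r = (Y^{−1}⊗Y^{−1})Δ(Y), the map ι_Y : O_q[G] → {}^R O_q[G] is an algebra isomorphism. -/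

import Mathlib

/-!
`ι_Y` is the action of `Y` on `A` through the convolution algebra: `ι_f ∘ ι_g = ι_{g * f}` and
`ι_ε = id`, so `ι_Y` is invertible with inverse `ι_{Y⁻¹}`. Moreover `ι_Y` commutes with the right
coaction `Δ`, hence `(Y⁻¹ ⊗ Y⁻¹) ∘ (ι_Y ⊗ ι_Y) = ε` and the cocycle identity collapses to
`r(ι_Y φ, ι_Y ψ) = Y(φψ)`; substituting this into the twisted product of `ι_Y φ` and `ι_Y ψ`
gives `ι_Y(φψ)`. For the unit, `r(1, 1)` is idempotent by multiplicativity of `r` in its first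
argument, while the cocycle identity gives `r(1, 1) = Y⁻¹(1) ≠ 0`; hence `Y⁻¹(1) = Y(1) = 1`.
-/

open TensorProduct

noncomputable section

universe u

variable {k : Type u} [Field k] {A : Type u} [Ring A] [HopfAlgebra k A]

/-- The twisted product `φ •_R ψ = r(φ₁, ψ₁) φ₂ ψ₂`, as a linear map `A ⊗ A → A`. -/
def mulRTwist (r : A ⊗[k] A →ₗ[k] k) : A ⊗[k] A →ₗ[k] A :=
  (TensorProduct.lid k A).toLinearMap
    ∘ₗ TensorProduct.map r (LinearMap.mul' k A)
    ∘ₗ (TensorProduct.tensorTensorTensorComm k A A A A).toLinearMap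
    ∘ₗ TensorProduct.map (Coalgebra.comul (R := k)) (Coalgebra.comul (R := k))

/-- The map `φ ⊗ ψ ↦ ψ₁ φ₁ r(φ₂, ψ₂)`. -/
def mulRTwist' (r : A ⊗[k] A →ₗ[k] k) : A ⊗[k] A →ₗ[k] A :=
  (TensorProduct.rid k A).toLinearMap
    ∘ₗ TensorProduct.map
        (LinearMap.mul' k A ∘ₗ (TensorProduct.comm k A A).toLinearMap) r
    ∘ₗ (TensorProduct.tensorTensorTensorComm k A A A A).toLinearMap
    ∘ₗ TensorProduct.map (Coalgebra.comul (R := k)) (Coalgebra.comul (R := k))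

/-- Convolution product of two functionals on the coalgebra `A ⊗[k] A`. -/
def convAA (f g : A ⊗[k] A →ₗ[k] k) : A ⊗[k] A →ₗ[k] k :=
  LinearMap.mul' k k ∘ₗ TensorProduct.map f g
    ∘ₗ (Coalgebra.comul (R := k) (A := A ⊗[k] A))

/-- Convolution product of two functionals on `A`. -/
def convA (f g : A →ₗ[k] k) : A →ₗ[k] k :=
  LinearMap.mul' k k ∘ₗ TensorProduct.map f g ∘ₗ (Coalgebra.comul (R := k) (A := A))

/-- The map `ι_Y : φ ↦ Y(φ₁) φ₂`. -/
def iotaY (Y : A →ₗ[k] k) : A →ₗ[k] A :=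
  (TensorProduct.lid k A).toLinearMap ∘ₗ TensorProduct.map Y LinearMap.id
    ∘ₗ (Coalgebra.comul (R := k) (A := A))

/-- The functional `φ ⊗ ψ ↦ Y⁻¹(φ₁) Y⁻¹(ψ₁) Y(φ₂ ψ₂)`, i.e. `(Y⁻¹ ⊗ Y⁻¹) Δ(Y)`. -/
def cocycleRHS (Y Yinv : A →ₗ[k] k) : A ⊗[k] A →ₗ[k] k :=
  LinearMap.mul' k k
    ∘ₗ TensorProduct.map (LinearMap.mul' k k ∘ₗ TensorProduct.map Yinv Yinv)
        (Y ∘ₗ LinearMap.mul' k A)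
    ∘ₗ (TensorProduct.tensorTensorTensorComm k A A A A).toLinearMap
    ∘ₗ TensorProduct.map (Coalgebra.comul (R := k)) (Coalgebra.comul (R := k))

lemma comul_comp_iotaY (f : A →ₗ[k] k) :
    Coalgebra.comul ∘ₗ iotaY f = map (iotaY f) LinearMap.id ∘ₗ Coalgebra.comul := by
  have hassoc : (TensorProduct.lid k (A ⊗[k] A)).toLinearMap ∘ₗ map f LinearMap.id
        ∘ₗ (TensorProduct.assoc k A A A).toLinearMap
      = map ((TensorProduct.lid k A).toLinearMap ∘ₗ map f LinearMap.id) LinearMap.id := by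
    ext; simp [TensorProduct.smul_tmul']
  calc Coalgebra.comul ∘ₗ iotaY f
      = (TensorProduct.lid k _).toLinearMap ∘ₗ map f Coalgebra.comul ∘ₗ Coalgebra.comul := by
        rw [CoassocSimps.lid_comp_map_assoc]; rfl
    _ = (TensorProduct.lid k _).toLinearMap ∘ₗ map f LinearMap.id
          ∘ₗ (TensorProduct.assoc k A A A).toLinearMap ∘ₗ Coalgebra.comul.rTensor A
          ∘ₗ Coalgebra.comul := by
        rw [Coalgebra.coassoc, LinearMap.lTensor, CoassocSimps.TensorProduct.map_comp_assoc,
          LinearMap.comp_id, LinearMap.id_comp]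
    _ = map (iotaY f) LinearMap.id ∘ₗ Coalgebra.comul := by
        simp only [← LinearMap.comp_assoc] at hassoc ⊢
        rw [hassoc, LinearMap.map_comp_rTensor]
        rfl

lemma comp_iotaY (f g : A →ₗ[k] k) : f ∘ₗ iotaY g = convA g f := by
  have h : f ∘ₗ (TensorProduct.lid k A).toLinearMap ∘ₗ map g LinearMap.id
      = LinearMap.mul' k k ∘ₗ map g f := by
    ext; simp [mul_comm]
  rw [convA, ← LinearMap.comp_assoc, ← h]
  rfl

lemma iotaY_comp_iotaY (f g : A →ₗ[k] k) : iotaY f ∘ₗ iotaY g = iotaY (convA g f) := by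
  calc iotaY f ∘ₗ iotaY g
      = (TensorProduct.lid k A).toLinearMap ∘ₗ map f LinearMap.id ∘ₗ Coalgebra.comul ∘ₗ iotaY g :=
        rfl
    _ = iotaY (f ∘ₗ iotaY g) := by
        rw [comul_comp_iotaY, CoassocSimps.TensorProduct.map_comp_assoc, LinearMap.id_comp]
        rfl
    _ = iotaY (convA g f) := by rw [comp_iotaY]

lemma iotaY_counit : iotaY (Coalgebra.counit (R := k) (A := A)) = LinearMap.id := by
  rw [iotaY, ← LinearMap.rTensor_def, Coalgebra.rTensor_counit_comp_comul]
  ext; simp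

lemma iotaY_bijective {Y Yinv : A →ₗ[k] k}
    (hY : convA Y Yinv = Coalgebra.counit ∧ convA Yinv Y = Coalgebra.counit) :
    Function.Bijective (iotaY Y) := by
  refine Function.bijective_iff_has_inverse.mpr ⟨iotaY Yinv, fun a => ?_, fun a => ?_⟩
  · rw [← LinearMap.comp_apply, iotaY_comp_iotaY, hY.1, iotaY_counit, LinearMap.id_apply]
  · rw [← LinearMap.comp_apply, iotaY_comp_iotaY, hY.2, iotaY_counit, LinearMap.id_apply]

lemma comul_comp_map_of_comul_comp {R C D : Type*} [CommSemiring R] [AddCommMonoid C]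
    [Module R C] [Coalgebra R C] [AddCommMonoid D] [Module R D] [Coalgebra R D]
    {F : C →ₗ[R] C} {G : D →ₗ[R] D}
    (hF : Coalgebra.comul ∘ₗ F = map F LinearMap.id ∘ₗ Coalgebra.comul)
    (hG : Coalgebra.comul ∘ₗ G = map G LinearMap.id ∘ₗ Coalgebra.comul) :
    Coalgebra.comul (R := R) ∘ₗ map F G
      = map (map F G) LinearMap.id ∘ₗ Coalgebra.comul := by
  change (tensorTensorTensorComm R C C D D).toLinearMap
      ∘ₗ map Coalgebra.comul Coalgebra.comul ∘ₗ _ = _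
  rw [← map_comp, hF, hG, map_comp, ← LinearMap.comp_assoc,
    tensorTensorTensorComm_comp_map, map_id, LinearMap.comp_assoc]
  rfl

lemma cocycleRHS_eq_convAA (Y Yinv : A →ₗ[k] k) :
    cocycleRHS Y Yinv
      = convAA (LinearMap.mul' k k ∘ₗ map Yinv Yinv) (Y ∘ₗ LinearMap.mul' k A) :=
  rfl

lemma convAA_comp {F : A ⊗[k] A →ₗ[k] A ⊗[k] A}
    (hF : Coalgebra.comul ∘ₗ F = map F LinearMap.id ∘ₗ Coalgebra.comul)
    (f g : A ⊗[k] A →ₗ[k] k) :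
    convAA f g ∘ₗ F = convAA (f ∘ₗ F) g := by
  rw [convAA, convAA, LinearMap.comp_assoc, LinearMap.comp_assoc, hF,
    CoassocSimps.TensorProduct.map_comp_assoc, LinearMap.comp_id]

lemma convAA_counit_left (g : A ⊗[k] A →ₗ[k] k) : convAA Coalgebra.counit g = g := by
  rw [convAA, CoassocSimps.map_counit_comp_comul_left]
  ext; simp

lemma mul'_comp_map_counit {R C D : Type*} [CommSemiring R] [AddCommMonoid C] [Module R C]
    [Coalgebra R C] [AddCommMonoid D] [Module R D] [Coalgebra R D] :
    LinearMap.mul' R R ∘ₗ map Coalgebra.counit Coalgebra.counit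
      = Coalgebra.counit (R := R) (A := C ⊗[R] D) := by
  ext; simp [mul_comm]

lemma cocycleRHS_comp_map_iotaY {Y Yinv : A →ₗ[k] k} (hY : convA Y Yinv = Coalgebra.counit) :
    cocycleRHS Y Yinv ∘ₗ map (iotaY Y) (iotaY Y) = Y ∘ₗ LinearMap.mul' k A := by
  rw [cocycleRHS_eq_convAA,
    convAA_comp (comul_comp_map_of_comul_comp (comul_comp_iotaY Y) (comul_comp_iotaY Y)),
    LinearMap.comp_assoc, ← map_comp, comp_iotaY, hY, mul'_comp_map_counit, convAA_counit_left]

lemma mulRTwist_comp_map_iotaY {r : A ⊗[k] A →ₗ[k] k} {Y : A →ₗ[k] k}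
    (hr : r ∘ₗ map (iotaY Y) (iotaY Y) = Y ∘ₗ LinearMap.mul' k A) :
    mulRTwist r ∘ₗ map (iotaY Y) (iotaY Y) = iotaY Y ∘ₗ LinearMap.mul' k A := by
  calc mulRTwist r ∘ₗ map (iotaY Y) (iotaY Y)
      = (TensorProduct.lid k A).toLinearMap ∘ₗ map r (LinearMap.mul' k A)
          ∘ₗ Coalgebra.comul ∘ₗ map (iotaY Y) (iotaY Y) :=
        rfl
    _ = (TensorProduct.lid k A).toLinearMap ∘ₗ map Y LinearMap.id
          ∘ₗ map (LinearMap.mul' k A) (LinearMap.mul' k A) ∘ₗ Coalgebra.comul := by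
        rw [comul_comp_map_of_comul_comp (comul_comp_iotaY Y) (comul_comp_iotaY Y),
          CoassocSimps.TensorProduct.map_comp_assoc, hr, CoassocSimps.TensorProduct.map_comp_assoc,
          LinearMap.comp_id, LinearMap.id_comp]
    _ = iotaY Y ∘ₗ LinearMap.mul' k A := by
        rw [show map (LinearMap.mul' k A) (LinearMap.mul' k A) ∘ₗ Coalgebra.comul
            = Coalgebra.comul ∘ₗ LinearMap.mul' k A from (Bialgebra.mulCoalgHom k A).map_comp_comul]
        rfl

lemma convA_apply_one (f g : A →ₗ[k] k) : convA f g 1 = f 1 * g 1 := by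
  simp [convA, Algebra.TensorProduct.one_def]

lemma cocycleRHS_apply_one_tmul_one (Y Yinv : A →ₗ[k] k) :
    cocycleRHS Y Yinv (1 ⊗ₜ 1) = Yinv 1 * Yinv 1 * Y 1 := by
  simp [cocycleRHS, Algebra.TensorProduct.one_def]

lemma iotaY_one (Y : A →ₗ[k] k) : iotaY Y 1 = algebraMap k A (Y 1) := by
  simp [iotaY, Algebra.TensorProduct.one_def, Algebra.algebraMap_eq_smul_one]

lemma isIdempotentElem_apply_one_tmul_one {r : A ⊗[k] A →ₗ[k] k}
    (hr : r ∘ₗ map (LinearMap.mul' k A) LinearMap.id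
        = LinearMap.mul' k k ∘ₗ map r r ∘ₗ (tensorTensorTensorComm k A A A A).toLinearMap
            ∘ₗ map LinearMap.id Coalgebra.comul) :
    IsIdempotentElem (r (1 ⊗ₜ 1)) := by
  unfold IsIdempotentElem
  simpa [Algebra.TensorProduct.one_def] using (LinearMap.congr_fun hr ((1 ⊗ₜ 1) ⊗ₜ 1)).symm

lemma apply_one_eq_one_of_cocycle {r : A ⊗[k] A →ₗ[k] k} {Y Yinv : A →ₗ[k] k}
    (hY : convA Y Yinv = Coalgebra.counit ∧ convA Yinv Y = Coalgebra.counit)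
    (hr : IsIdempotentElem (r (1 ⊗ₜ 1))) (hcocycle : r = cocycleRHS Y Yinv) : Y 1 = 1 := by
  have hYYinv : Y 1 * Yinv 1 = 1 := by rw [← convA_apply_one, hY.1, Bialgebra.counit_one]
  have hYinvY : Yinv 1 * Y 1 = 1 := by rw [← convA_apply_one, hY.2, Bialgebra.counit_one]
  have hr_one : r (1 ⊗ₜ 1) = Yinv 1 := by
    rw [hcocycle, cocycleRHS_apply_one_tmul_one, mul_assoc, hYinvY, mul_one]
  have hYinv_one : Yinv 1 = 1 :=
    (IsIdempotentElem.iff_eq_zero_or_one.mp (hr_one ▸ hr)).resolve_left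
      (right_ne_zero_of_mul_eq_one hYYinv)
  simpa [hYinv_one] using hYYinv

theorem statement13_general (r : A ⊗[k] A →ₗ[k] k)
    -- co-quasitriangularity of `r`:
    (h2 : r ∘ₗ TensorProduct.map (LinearMap.mul' k A) LinearMap.id
        = LinearMap.mul' k k ∘ₗ TensorProduct.map r r
            ∘ₗ (TensorProduct.tensorTensorTensorComm k A A A A).toLinearMap
            ∘ₗ TensorProduct.map LinearMap.id (Coalgebra.comul (R := k)))
    -- `Y` is an invertible element of the dual (convolution) algebra, with inverse `Yinv`:
    (Y Yinv : A →ₗ[k] k)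
    (hY : convA Y Yinv = Coalgebra.counit ∧ convA Yinv Y = Coalgebra.counit)
    -- the cocycle identity `r = (Y⁻¹ ⊗ Y⁻¹) Δ(Y)`:
    (hcocycle : r = cocycleRHS Y Yinv) :
    -- `ι_Y : A → {}^R A` is an isomorphism of algebras:
    Function.Bijective (iotaY Y)
      ∧ (∀ φ ψ : A, iotaY Y (φ * ψ) = mulRTwist r (iotaY Y φ ⊗ₜ[k] iotaY Y ψ))
      ∧ iotaY Y (1 : A) = 1 := by
  have hr : r ∘ₗ map (iotaY Y) (iotaY Y) = Y ∘ₗ LinearMap.mul' k A := by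
    rw [hcocycle]
    exact cocycleRHS_comp_map_iotaY hY.1
  have hY_one : Y 1 = 1 :=
    apply_one_eq_one_of_cocycle hY (isIdempotentElem_apply_one_tmul_one h2) hcocycle
  refine ⟨iotaY_bijective hY, fun φ ψ => ?_, ?_⟩
  · exact (LinearMap.congr_fun (mulRTwist_comp_map_iotaY hr) (φ ⊗ₜ ψ)).symm
  · rw [iotaY_one, hY_one, map_one]

theorem statement13 (r : A ⊗[k] A →ₗ[k] k)
    -- co-quasitriangularity of `r`:
    (hconv : ∃ rinv : A ⊗[k] A →ₗ[k] k,
      convAA r rinv = Coalgebra.counit ∧ convAA rinv r = Coalgebra.counit)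
    (h1 : mulRTwist r = mulRTwist' r)
    (h2 : r ∘ₗ TensorProduct.map (LinearMap.mul' k A) LinearMap.id
        = LinearMap.mul' k k ∘ₗ TensorProduct.map r r
            ∘ₗ (TensorProduct.tensorTensorTensorComm k A A A A).toLinearMap
            ∘ₗ TensorProduct.map LinearMap.id (Coalgebra.comul (R := k)))
    (h3 : r ∘ₗ TensorProduct.map LinearMap.id (LinearMap.mul' k A)
        = LinearMap.mul' k k ∘ₗ TensorProduct.map r r
            ∘ₗ (TensorProduct.tensorTensorTensorComm k A A A A).toLinearMap
            ∘ₗ TensorProduct.map (Coalgebra.comul (R := k))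
                (TensorProduct.comm k A A).toLinearMap)
    -- `Y` is an invertible element of the dual (convolution) algebra, with inverse `Yinv`:
    (Y Yinv : A →ₗ[k] k)
    (hY : convA Y Yinv = Coalgebra.counit ∧ convA Yinv Y = Coalgebra.counit)
    -- the cocycle identity `r = (Y⁻¹ ⊗ Y⁻¹) Δ(Y)`:
    (hcocycle : r = cocycleRHS Y Yinv) :
    -- `ι_Y : A → {}^R A` is an isomorphism of algebras:
    Function.Bijective (iotaY Y)
      ∧ (∀ φ ψ : A, iotaY Y (φ * ψ) = mulRTwist r (iotaY Y φ ⊗ₜ[k] iotaY Y ψ))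
      ∧ iotaY Y (1 : A) = 1 :=
  statement13_general r h2 Y Yinv hY hcocycle
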